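/- Let X be a compact Hausdorff space. Then for every max-min measure μ on X, every φ ∈ C(X) and every c > 0, the inequalities μ(φ + c_X) ≤ μ(φ) + c and μ(φ) - c ≤ μ(φ - c_X) hold, where c_X denotes the constant function with value c. -/

import Mathlib

def IsMaxMinMeasure {X : Type*} [TopologicalSpace X] (μ : C(X, ℝ) → ℝ) : Prop :=
  (∀ c : ℝ, μ (ContinuousMap.const X c) = c) ∧
  (∀ φ ψ : C(X, ℝ), μ (φ ⊔ ψ) = max (μ φ) (μ ψ)) ∧
  (∀ (c : ℝ) (φ : C(X, ℝ)), μ (ContinuousMap.const X c ⊓ φ) = min c (μ φ))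

/-!
To see `μ(φ + c) - c ≤ μ φ`, take `s < μ(φ + c) - c` and squeeze `φ + c` through `χ = g ∘ φ`,
where `g : ℝ → ℝ` is the identity below `s` and the translation by `c` above `s + w`
(`w > 0` small). Since `φ + c ≤ (s + c + w) ∨ χ` and `s + c + w < μ(φ + c)`, the max-axiom
forces `μ(φ + c) ≤ μ χ`, so `s < μ χ`; since `s ∧ χ ≤ φ`, the min-axiom then gives `s ≤ μ φ`.
-/

open ContinuousMap

noncomputable def shiftAbove (s w c : ℝ) : C(ℝ, ℝ) :=
  ⟨fun y => y + min c (max 0 (c / w * (y - s))), by fun_prop⟩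

section shiftAbove

variable {s w c y : ℝ}

lemma shiftAbove_apply : shiftAbove s w c y = y + min c (max 0 (c / w * (y - s))) := rfl

lemma shiftAbove_of_le (hc : 0 ≤ c) (hw : 0 ≤ w) (hy : y ≤ s) : shiftAbove s w c y = y := by
  have : c / w * (y - s) ≤ 0 := mul_nonpos_of_nonneg_of_nonpos (by positivity) (by linarith)
  rw [shiftAbove_apply, max_eq_left this, min_eq_right hc, add_zero]

lemma shiftAbove_of_ge (hc : 0 ≤ c) (hw : 0 < w) (hy : s + w ≤ y) :
    shiftAbove s w c y = y + c := by
  have : c ≤ c / w * (y - s) := by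
    calc c = c / w * w := (div_mul_cancel₀ c hw.ne').symm
      _ ≤ c / w * (y - s) := by gcongr; linarith
  rw [shiftAbove_apply, max_eq_right (hc.trans this), min_eq_left this]

end shiftAbove

namespace IsMaxMinMeasure

variable {X : Type*} [TopologicalSpace X] {μ : C(X, ℝ) → ℝ}

lemma map_const (hμ : IsMaxMinMeasure μ) (c : ℝ) : μ (const X c) = c := hμ.1 c

lemma map_sup (hμ : IsMaxMinMeasure μ) (φ ψ : C(X, ℝ)) : μ (φ ⊔ ψ) = max (μ φ) (μ ψ) :=
  hμ.2.1 φ ψ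

lemma map_const_inf (hμ : IsMaxMinMeasure μ) (c : ℝ) (φ : C(X, ℝ)) :
    μ (const X c ⊓ φ) = min c (μ φ) :=
  hμ.2.2 c φ

lemma monotone (hμ : IsMaxMinMeasure μ) : Monotone μ := fun φ ψ h => by
  simpa [sup_eq_right.mpr h] using (hμ.map_sup φ ψ).ge

lemma le_of_le_const_sup (hμ : IsMaxMinMeasure μ) {t : ℝ} {ψ χ : C(X, ℝ)}
    (h : ψ ≤ const X t ⊔ χ) (ht : t < μ ψ) : μ ψ ≤ μ χ := by
  have := hμ.monotone h
  rw [hμ.map_sup, hμ.map_const] at this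
  exact (le_max_iff.mp this).resolve_left ht.not_ge

lemma le_of_const_inf_le (hμ : IsMaxMinMeasure μ) {s : ℝ} {χ φ : C(X, ℝ)}
    (h : const X s ⊓ χ ≤ φ) (hs : s ≤ μ χ) : s ≤ μ φ := by
  have := hμ.monotone h
  rwa [hμ.map_const_inf, min_eq_left hs] at this

lemma add_const_le (hμ : IsMaxMinMeasure μ) (φ : C(X, ℝ)) {c : ℝ} (hc : 0 ≤ c) :
    μ (φ + const X c) ≤ μ φ + c := by
  rw [← sub_le_iff_le_add]
  refine le_of_forall_lt_imp_le_of_dense fun s hs => ?_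
  obtain ⟨w, hw, hws⟩ : ∃ w, 0 < w ∧ s + c + w < μ (φ + const X c) :=
    ⟨(μ (φ + const X c) - c - s) / 2, by linarith, by linarith⟩
  set χ := (shiftAbove s w c).comp φ
  have hupper : φ + const X c ≤ const X (s + c + w) ⊔ χ := fun x => by
    change φ x + c ≤ max (s + c + w) (shiftAbove s w c (φ x))
    rcases le_total (φ x) (s + w) with hx | hx
    · exact le_sup_of_le_left (by linarith)
    · exact le_sup_of_le_right (shiftAbove_of_ge hc hw hx).ge
  have hlower : const X s ⊓ χ ≤ φ := fun x => by
    rcases le_total (φ x) s with hx | hx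
    · exact inf_le_of_right_le (shiftAbove_of_le hc hw.le hx).le
    · exact inf_le_of_left_le hx
  have hχ := hμ.le_of_le_const_sup hupper hws
  exact hμ.le_of_const_inf_le hlower (by linarith)

lemma sub_const_le (hμ : IsMaxMinMeasure μ) (φ : C(X, ℝ)) {c : ℝ} (hc : 0 ≤ c) :
    μ φ - c ≤ μ (φ - const X c) := by
  simpa using hμ.add_const_le (φ - const X c) hc

end IsMaxMinMeasure

theorem maxMinMeasure_translation_ineq_general
    {X : Type*} [TopologicalSpace X]
    (μ : C(X, ℝ) → ℝ) (hμ : IsMaxMinMeasure μ) (φ : C(X, ℝ)) (c : ℝ) (hc : 0 < c) :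
    μ (φ + ContinuousMap.const X c) ≤ μ φ + c ∧
      μ φ - c ≤ μ (φ - ContinuousMap.const X c) :=
  ⟨hμ.add_const_le φ hc.le, hμ.sub_const_le φ hc.le⟩

/-- on any compact Hausdorff space, every max-min measure satisfies
`μ(φ + c) ≤ μ(φ) + c` and `μ(φ) - c ≤ μ(φ - c)` for every `c > 0`. -/
theorem maxMinMeasure_translation_ineq
    {X : Type*} [TopologicalSpace X] [CompactSpace X] [T2Space X]
    (μ : C(X, ℝ) → ℝ) (hμ : IsMaxMinMeasure μ) (φ : C(X, ℝ)) (c : ℝ) (hc : 0 < c) :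
    μ (φ + ContinuousMap.const X c) ≤ μ φ + c ∧
      μ φ - c ≤ μ (φ - ContinuousMap.const X c) :=
  maxMinMeasure_translation_ineq_general μ hμ φ c hc
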